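/- arXiv:2409.19384 — 3 statements merged into one kernel-verified Lean document; each statement's English description precedes it below -/
import Mathlib

section
/- For a set-valued 2-Segal simplicial set X, the multiplication on the span algebra is associative: the two compositions of the span m : X_1 ×_{X_0} X_1 ← X_2 → X_1 (with legs (d_2, d_0) and d_1) are canonically isomorphic, both being given by the span X_1 ×_{X_0} X_1 ×_{X_0} X_1 ← X_3 → X_1. -/
open CategoryTheory

/-! Spans of sets attached to a (discrete) 2-Segal simplicial set `X`: the multiplication
span `m : X₁ ×_{X₀} X₁ ← X₂ → X₁` and the associativity of its composites. -/

/-- The inclusion of the vertex `{k} ⊆ [n]`. -/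
def vert (k n : ℕ) (h : k ≤ n) : SimplexCategory.mk 0 ⟶ SimplexCategory.mk n :=
  SimplexCategory.Hom.mk
    ⟨fun _ => ⟨k, by simp [SimplexCategory.len_mk]; omega⟩, by intro a b _; exact le_rfl⟩

/-- The inclusion of the pair `{k, l} ⊆ [n]` (`k ≤ l`). -/
def pairMap (k l n : ℕ) (hkl : k ≤ l) (hln : l ≤ n) :
    SimplexCategory.mk 1 ⟶ SimplexCategory.mk n :=
  SimplexCategory.Hom.mk
    ⟨fun a => ⟨if a.val = 0 then k else l, by simp [SimplexCategory.len_mk]; split_ifs <;> omega⟩,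
     by
      intro a b hab
      have := a.isLt; have := b.isLt
      simp only [Fin.le_def] at hab ⊢
      split_ifs <;> omega⟩

variable (X : SimplexCategoryᵒᵖ ⥤ Type u)

/-- The set of `n`-simplices. -/
def obj (n : ℕ) : Type u := X.obj (Opposite.op (SimplexCategory.mk n))

/-- Restriction of simplices along a morphism of the simplex category. -/
def res {m n : ℕ} (f : SimplexCategory.mk m ⟶ SimplexCategory.mk n) :
    obj X n → obj X m := X.map f.op

lemma res_res {a b c : ℕ} (f : SimplexCategory.mk a ⟶ SimplexCategory.mk b)
    (g : SimplexCategory.mk b ⟶ SimplexCategory.mk c) (x : obj X c) :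
    res X f (res X g x) = res X (f ≫ g) x := by
  show X.map f.op (X.map g.op x) = X.map (f ≫ g).op x
  first
    | (rw [op_comp, Functor.map_comp]; done)
    | (rw [op_comp, Functor.map_comp]; rfl)
    | (rw [op_comp, FunctorToTypes.map_comp_apply])

lemma res_congr {m n : ℕ} {f g : SimplexCategory.mk m ⟶ SimplexCategory.mk n}
    (h : f = g) (x : obj X n) : res X f x = res X g x := by rw [h]

/-- source vertex of an edge -/
def v0 : obj X 1 → obj X 0 := res X (vert 0 1 (by omega))
/-- target vertex of an edge -/
def v1 : obj X 1 → obj X 0 := res X (vert 1 1 (by omega))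

/-- the edge `{k,l}` of an `n`-simplex -/
def ed (k l n : ℕ) (hkl : k ≤ l) (hln : l ≤ n) : obj X n → obj X 1 :=
  res X (pairMap k l n hkl hln)

/-- `X₁ ×_{X₀} X₁`: pairs of composable edges. -/
def P2 : Type u := {p : obj X 1 × obj X 1 // v1 X p.1 = v0 X p.2}

/-- `X₁ ×_{X₀} X₁ ×_{X₀} X₁`: triples of composable edges. -/
def P3 : Type u :=
  {p : obj X 1 × obj X 1 × obj X 1 //
    v1 X p.1 = v0 X p.2.1 ∧ v1 X p.2.1 = v0 X p.2.2}

lemma compat01_12 (x : obj X 2) :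
    v1 X (ed X 0 1 2 (by omega) (by omega) x) = v0 X (ed X 1 2 2 (by omega) (by omega) x) := by
  rw [v1, v0, ed, ed, res_res, res_res]
  exact res_congr X (by apply SimplexCategory.Hom.ext; ext a; fin_cases a <;> rfl) x

lemma compat02_12 (x : obj X 2) :
    v1 X (ed X 0 2 2 (by omega) (by omega) x) = v1 X (ed X 1 2 2 (by omega) (by omega) x) := by
  rw [v1, ed, ed, res_res, res_res]
  exact res_congr X (by apply SimplexCategory.Hom.ext; ext a; fin_cases a <;> rfl) x

lemma compat02_01 (x : obj X 2) :
    v0 X (ed X 0 2 2 (by omega) (by omega) x) = v0 X (ed X 0 1 2 (by omega) (by omega) x) := by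
  rw [v0, ed, ed, res_res, res_res]
  exact res_congr X (by apply SimplexCategory.Hom.ext; ext a; fin_cases a <;> rfl) x

/-- The left leg of the multiplication span `m`: `X₂ → X₁ ×_{X₀} X₁`,
`x ↦ (∂₂x, ∂₀x)`. -/
def mL : obj X 2 → P2 X :=
  fun x => ⟨(ed X 0 1 2 (by omega) (by omega) x, ed X 1 2 2 (by omega) (by omega) x),
    compat01_12 X x⟩

/-- The right leg of the multiplication span `m`: `X₂ → X₁`, `x ↦ ∂₁x`. -/
def mR : obj X 2 → obj X 1 := ed X 0 2 2 (by omega) (by omega)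

/-- Apex of the span `m × id : X₁×X₀×X₁×X₀×X₁ ← X₂ ×_{X₀} X₁ → X₁ ×_{X₀} X₁`. -/
def Apex1 : Type u :=
  {p : obj X 2 × obj X 1 // v1 X (ed X 0 2 2 (by omega) (by omega) p.1) = v0 X p.2}

/-- Left leg of `m × id`. -/
def legL1 : Apex1 X → P3 X :=
  fun p => ⟨(ed X 0 1 2 (by omega) (by omega) p.1.1,
      ed X 1 2 2 (by omega) (by omega) p.1.1, p.1.2),
    ⟨compat01_12 X p.1.1, by rw [← compat02_12 X p.1.1]; exact p.2⟩⟩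

/-- Right leg of `m × id`. -/
def legR1 : Apex1 X → P2 X :=
  fun p => ⟨(ed X 0 2 2 (by omega) (by omega) p.1.1, p.1.2), p.2⟩

/-- Apex of the composite span `m ∘ (m × id)`: the fiber product of `m × id` and `m`
over `X₁ ×_{X₀} X₁`. -/
def K1 : Type u := {w : Apex1 X × obj X 2 // mL X w.2 = legR1 X w.1}

/-- Apex of the span `id × m`. -/
def Apex2 : Type u :=
  {p : obj X 1 × obj X 2 // v1 X p.1 = v0 X (ed X 0 1 2 (by omega) (by omega) p.2)}

/-- Left leg of `id × m`. -/
def legL2 : Apex2 X → P3 X :=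
  fun p => ⟨(p.1.1, ed X 0 1 2 (by omega) (by omega) p.1.2,
      ed X 1 2 2 (by omega) (by omega) p.1.2),
    ⟨p.2, compat01_12 X p.1.2⟩⟩

/-- Right leg of `id × m`. -/
def legR2 : Apex2 X → P2 X :=
  fun p => ⟨(p.1.1, ed X 0 2 2 (by omega) (by omega) p.1.2),
    by rw [compat02_01 X p.1.2]; exact p.2⟩

/-- Apex of the composite span `m ∘ (id × m)`. -/
def K2 : Type u := {w : Apex2 X × obj X 2 // mL X w.2 = legR2 X w.1}

lemma compat3a (x : obj X 3) :
    v1 X (ed X 0 1 3 (by omega) (by omega) x) = v0 X (ed X 1 2 3 (by omega) (by omega) x) := by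
  rw [v1, v0, ed, ed, res_res, res_res]
  exact res_congr X (by apply SimplexCategory.Hom.ext; ext a; fin_cases a <;> rfl) x

lemma compat3b (x : obj X 3) :
    v1 X (ed X 1 2 3 (by omega) (by omega) x) = v0 X (ed X 2 3 3 (by omega) (by omega) x) := by
  rw [v1, v0, ed, ed, res_res, res_res]
  exact res_congr X (by apply SimplexCategory.Hom.ext; ext a; fin_cases a <;> rfl) x

/-- Left leg of the span `X₁ ×_{X₀} X₁ ×_{X₀} X₁ ← X₃ → X₁`: the three inert edges
`{0,1}, {1,2}, {2,3}` of a 3-simplex. -/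
def L3 : obj X 3 → P3 X :=
  fun x => ⟨(ed X 0 1 3 (by omega) (by omega) x, ed X 1 2 3 (by omega) (by omega) x,
      ed X 2 3 3 (by omega) (by omega) x),
    ⟨compat3a X x, compat3b X x⟩⟩

/-- Right leg: the long (active) edge `{0,3}` of a 3-simplex. -/
def R3 : obj X 3 → obj X 1 := ed X 0 3 3 (by omega) (by omega)

/-! The apex of `m ∘ (m × id)` is the set of pairs of 2-simplices `(a, b)` with `∂₁a = ∂₂b`
(the remaining edge is `∂₀b`), and the apex of `m ∘ (id × m)` the set of pairs `(a, b)` with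
`∂₀b = ∂₁a`. The 2-Segal conditions for the two triangulations `{012, 023}` and `{013, 123}`
of the square say precisely that `X₃` maps bijectively onto these sets through the faces
`(∂₃, ∂₁)`, resp. `(∂₂, ∂₀)`. The legs agree because every edge of a face of a 3-simplex is
an edge of the 3-simplex. -/

lemma v1_ed_eq_v0_ed {k l p n : ℕ} (hkl : k ≤ l) (hlp : l ≤ p) (hpn : p ≤ n) (x : obj X n) :
    v1 X (ed X k l n hkl (hlp.trans hpn) x) = v0 X (ed X l p n hlp hpn x) := by
  rw [v1, v0, ed, ed, res_res, res_res]
  exact res_congr X (by apply SimplexCategory.Hom.ext; ext a; fin_cases a; rfl) x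

lemma ed_res {k l m k' l' n : ℕ} {hkl : k ≤ l} {hlm : l ≤ m} {hkl' : k' ≤ l'} {hln : l' ≤ n}
    {f : SimplexCategory.mk m ⟶ SimplexCategory.mk n}
    (h : pairMap k l m hkl hlm ≫ f = pairMap k' l' n hkl' hln) (x : obj X n) :
    ed X k l m hkl hlm (res X f x) = ed X k' l' n hkl' hln x := by
  rw [ed, ed, res_res, h]

section FaceEdges

variable (x : obj X 3)

lemma ed01_res_δ3 :
    ed X 0 1 2 (by omega) (by omega) (res X (SimplexCategory.δ (3 : Fin 4)) x) =
    ed X 0 1 3 (by omega) (by omega) x :=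
  ed_res X (by apply SimplexCategory.Hom.ext; ext a; fin_cases a <;> rfl) x

lemma ed12_res_δ3 :
    ed X 1 2 2 (by omega) (by omega) (res X (SimplexCategory.δ (3 : Fin 4)) x) =
    ed X 1 2 3 (by omega) (by omega) x :=
  ed_res X (by apply SimplexCategory.Hom.ext; ext a; fin_cases a <;> rfl) x

lemma ed02_res_δ3 :
    ed X 0 2 2 (by omega) (by omega) (res X (SimplexCategory.δ (3 : Fin 4)) x) =
    ed X 0 2 3 (by omega) (by omega) x :=
  ed_res X (by apply SimplexCategory.Hom.ext; ext a; fin_cases a <;> rfl) x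

lemma ed01_res_δ1 :
    ed X 0 1 2 (by omega) (by omega) (res X (SimplexCategory.δ (1 : Fin 4)) x) =
    ed X 0 2 3 (by omega) (by omega) x :=
  ed_res X (by apply SimplexCategory.Hom.ext; ext a; fin_cases a <;> rfl) x

lemma ed12_res_δ1 :
    ed X 1 2 2 (by omega) (by omega) (res X (SimplexCategory.δ (1 : Fin 4)) x) =
    ed X 2 3 3 (by omega) (by omega) x :=
  ed_res X (by apply SimplexCategory.Hom.ext; ext a; fin_cases a <;> rfl) x

lemma ed02_res_δ1 :
    ed X 0 2 2 (by omega) (by omega) (res X (SimplexCategory.δ (1 : Fin 4)) x) =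
    ed X 0 3 3 (by omega) (by omega) x :=
  ed_res X (by apply SimplexCategory.Hom.ext; ext a; fin_cases a <;> rfl) x

lemma ed01_res_δ2 :
    ed X 0 1 2 (by omega) (by omega) (res X (SimplexCategory.δ (2 : Fin 4)) x) =
    ed X 0 1 3 (by omega) (by omega) x :=
  ed_res X (by apply SimplexCategory.Hom.ext; ext a; fin_cases a <;> rfl) x

lemma ed12_res_δ2 :
    ed X 1 2 2 (by omega) (by omega) (res X (SimplexCategory.δ (2 : Fin 4)) x) =
    ed X 1 3 3 (by omega) (by omega) x :=
  ed_res X (by apply SimplexCategory.Hom.ext; ext a; fin_cases a <;> rfl) x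

lemma ed02_res_δ2 :
    ed X 0 2 2 (by omega) (by omega) (res X (SimplexCategory.δ (2 : Fin 4)) x) =
    ed X 0 3 3 (by omega) (by omega) x :=
  ed_res X (by apply SimplexCategory.Hom.ext; ext a; fin_cases a <;> rfl) x

lemma ed01_res_δ0 :
    ed X 0 1 2 (by omega) (by omega) (res X (SimplexCategory.δ (0 : Fin 4)) x) =
    ed X 1 2 3 (by omega) (by omega) x :=
  ed_res X (by apply SimplexCategory.Hom.ext; ext a; fin_cases a <;> rfl) x

lemma ed12_res_δ0 :
    ed X 1 2 2 (by omega) (by omega) (res X (SimplexCategory.δ (0 : Fin 4)) x) =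
    ed X 2 3 3 (by omega) (by omega) x :=
  ed_res X (by apply SimplexCategory.Hom.ext; ext a; fin_cases a <;> rfl) x

lemma ed02_res_δ0 :
    ed X 0 2 2 (by omega) (by omega) (res X (SimplexCategory.δ (0 : Fin 4)) x) =
    ed X 1 3 3 (by omega) (by omega) x :=
  ed_res X (by apply SimplexCategory.Hom.ext; ext a; fin_cases a <;> rfl) x

end FaceEdges

theorem Function.Bijective.exists_equiv_comp_eq {S T A B : Type*} {f : S → T}
    (hf : Function.Bijective f) {l : S → A} {r : S → B} {l' : T → A} {r' : T → B}
    (hl : ∀ s, l' (f s) = l s) (hr : ∀ s, r' (f s) = r s) :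
    ∃ e : T ≃ S, (∀ t, l (e t) = l' t) ∧ (∀ t, r (e t) = r' t) := by
  refine ⟨(Equiv.ofBijective f hf).symm, fun t => ?_, fun t => ?_⟩
  · rw [← hl, Equiv.ofBijective_apply_symm_apply f hf]
  · rw [← hr, Equiv.ofBijective_apply_symm_apply f hf]

def toK1 (x : obj X 3) : K1 X :=
  ⟨⟨⟨⟨res X (SimplexCategory.δ (3 : Fin 4)) x, ed X 2 3 3 (by omega) (by omega) x⟩,
      by rw [ed02_res_δ3]; exact v1_ed_eq_v0_ed X _ _ _ x⟩,
    res X (SimplexCategory.δ (1 : Fin 4)) x⟩,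
    Subtype.ext (Prod.ext ((ed01_res_δ1 X x).trans (ed02_res_δ3 X x).symm) (ed12_res_δ1 X x))⟩

def toK2 (x : obj X 3) : K2 X :=
  ⟨⟨⟨⟨ed X 0 1 3 (by omega) (by omega) x, res X (SimplexCategory.δ (0 : Fin 4)) x⟩,
      by rw [ed01_res_δ0]; exact compat3a X x⟩,
    res X (SimplexCategory.δ (2 : Fin 4)) x⟩,
    Subtype.ext (Prod.ext (ed01_res_δ2 X x) ((ed12_res_δ2 X x).trans (ed02_res_δ0 X x).symm))⟩

lemma toK1_eq_iff (x : obj X 3) (w : K1 X) :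
    toK1 X x = w ↔ res X (SimplexCategory.δ (3 : Fin 4)) x = w.1.1.1.1 ∧
      res X (SimplexCategory.δ (1 : Fin 4)) x = w.1.2 := by
  refine ⟨fun h => h ▸ ⟨rfl, rfl⟩, fun ⟨h3, h1⟩ => ?_⟩
  have h23 : ed X 2 3 3 (by omega) (by omega) x = w.1.1.1.2 := by
    rw [← ed12_res_δ1, h1]
    exact congrArg (fun q : P2 X => q.1.2) w.2
  exact Subtype.ext (Prod.ext (Subtype.ext (Prod.ext h3 h23)) h1)

lemma toK2_eq_iff (x : obj X 3) (w : K2 X) :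
    toK2 X x = w ↔ res X (SimplexCategory.δ (2 : Fin 4)) x = w.1.2 ∧
      res X (SimplexCategory.δ (0 : Fin 4)) x = w.1.1.1.2 := by
  refine ⟨fun h => h ▸ ⟨rfl, rfl⟩, fun ⟨h2, h0⟩ => ?_⟩
  have h01 : ed X 0 1 3 (by omega) (by omega) x = w.1.1.1.1 := by
    rw [← ed01_res_δ2, h2]
    exact congrArg (fun q : P2 X => q.1.1) w.2
  exact Subtype.ext (Prod.ext (Subtype.ext (Prod.ext h01 h0)) h2)

lemma toK1_bijective
    (hseg02 : ∀ a b : obj X 2,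
      ed X 0 2 2 (by omega) (by omega) a = ed X 0 1 2 (by omega) (by omega) b →
      ∃! x : obj X 3,
        res X (SimplexCategory.δ (3 : Fin 4)) x = a ∧
        res X (SimplexCategory.δ (1 : Fin 4)) x = b) :
    Function.Bijective (toK1 X) :=
  (Function.bijective_iff_existsUnique _).2 fun w => by
    simpa only [toK1_eq_iff] using
      hseg02 _ _ (congrArg (fun q : P2 X => q.1.1) w.2).symm

lemma toK2_bijective
    (hseg13 : ∀ a b : obj X 2,
      ed X 1 2 2 (by omega) (by omega) a = ed X 0 2 2 (by omega) (by omega) b →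
      ∃! x : obj X 3,
        res X (SimplexCategory.δ (2 : Fin 4)) x = a ∧
        res X (SimplexCategory.δ (0 : Fin 4)) x = b) :
    Function.Bijective (toK2 X) :=
  (Function.bijective_iff_existsUnique _).2 fun w => by
    simpa only [toK2_eq_iff] using hseg13 _ _ (congrArg (fun q : P2 X => q.1.2) w.2)

lemma legL1_toK1 (x : obj X 3) : legL1 X (toK1 X x).1.1 = L3 X x :=
  Subtype.ext (Prod.ext (ed01_res_δ3 X x) (Prod.ext (ed12_res_δ3 X x) rfl))

lemma mR_toK1 (x : obj X 3) : mR X (toK1 X x).1.2 = R3 X x :=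
  ed02_res_δ1 X x

lemma legL2_toK2 (x : obj X 3) : legL2 X (toK2 X x).1.1 = L3 X x :=
  Subtype.ext (Prod.ext rfl (Prod.ext (ed01_res_δ0 X x) (ed12_res_δ0 X x)))

lemma mR_toK2 (x : obj X 3) : mR X (toK2 X x).1.2 = R3 X x :=
  ed02_res_δ2 X x

/-- For a (discrete) 2-Segal simplicial set `X` — here only the two lowest 2-Segal
conditions, for `n = 3` and `(i,j) ∈ {(0,2), (1,3)}`, are needed — the two composites
`m ∘ (m × id)` and `m ∘ (id × m)` of the multiplication span
`m : X₁ ×_{X₀} X₁ ← X₂ → X₁` are both isomorphic, as spans, to the span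
`X₁ ×_{X₀} X₁ ×_{X₀} X₁ ← X₃ → X₁` whose left leg is restriction along the three inert
maps `[1] → [3]` and whose right leg is restriction along the active map `[1] → [3]`.
In particular the span multiplication is associative. -/
theorem two_segal_span_assoc
    (hseg02 : ∀ a b : obj X 2,
      ed X 0 2 2 (by omega) (by omega) a = ed X 0 1 2 (by omega) (by omega) b →
      ∃! x : obj X 3,
        res X (SimplexCategory.δ (3 : Fin 4)) x = a ∧
        res X (SimplexCategory.δ (1 : Fin 4)) x = b)
    (hseg13 : ∀ a b : obj X 2,
      ed X 1 2 2 (by omega) (by omega) a = ed X 0 2 2 (by omega) (by omega) b →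
      ∃! x : obj X 3,
        res X (SimplexCategory.δ (2 : Fin 4)) x = a ∧
        res X (SimplexCategory.δ (0 : Fin 4)) x = b) :
    (∃ e : K1 X ≃ obj X 3,
      (∀ w : K1 X, L3 X (e w) = legL1 X w.1.1) ∧
      (∀ w : K1 X, R3 X (e w) = mR X w.1.2)) ∧
    (∃ e : K2 X ≃ obj X 3,
      (∀ w : K2 X, L3 X (e w) = legL2 X w.1.1) ∧
      (∀ w : K2 X, R3 X (e w) = mR X w.1.2)) :=
  ⟨(toK1_bijective X hseg02).exists_equiv_comp_eq (legL1_toK1 X) (mR_toK1 X),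
    (toK2_bijective X hseg13).exists_equiv_comp_eq (legL2_toK2 X) (mR_toK2 X)⟩
end

section
/- In the cohomological Hall algebra of the m-loop quiver, the shuffle product is associative: for symmetric polynomials f ∈ ℚ[x_1,...,x_a]^{S_a}, g ∈ ℚ[x_1,...,x_b]^{S_b}, h ∈ ℚ[x_1,...,x_c]^{S_c}, defining (f·g)(x_1,...,x_{a+b}) = Σ_{π ∈ sh(a,b)} π( f(x_1,...,x_a) g(x_{a+1},...,x_{a+b}) Π_{l=1}^{b} Π_{k=1}^{a} (x_{a+l} − x_k)^{m−1} ), one has (f·g)·h = f·(g·h). -/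
open MvPolynomial
open scoped Classical

/-- `π` is an `(a,b)`-shuffle: it is increasing on the first `a` and on the last `b`
variables. -/
def IsShuffle (a b : ℕ) (π : Equiv.Perm (Fin (a + b))) : Prop :=
  (∀ i j : Fin a, i < j → π (Fin.castAdd b i) < π (Fin.castAdd b j)) ∧
  (∀ i j : Fin b, i < j → π (Fin.natAdd a i) < π (Fin.natAdd a j))

/-- The shuffle product of the cohomological Hall algebra of the `m`-loop quiver:
`(f·g)(x_1,…,x_{a+b}) = Σ_{π ∈ sh(a,b)} π( f(x_1,…,x_a) g(x_{a+1},…,x_{a+b})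
  Π_{l=1}^{b} Π_{k=1}^{a} (x_{a+l} − x_k)^{m−1} )`. -/
noncomputable def hallMul (m : ℕ) {a b : ℕ}
    (f : MvPolynomial (Fin a) ℚ) (g : MvPolynomial (Fin b) ℚ) :
    MvPolynomial (Fin (a + b)) ℚ :=
  ∑ π : Equiv.Perm (Fin (a + b)),
    if IsShuffle a b π then
      rename π
        (rename (Fin.castAdd b) f * rename (Fin.natAdd a) g *
          ∏ l : Fin b, ∏ k : Fin a,
            (X (Fin.natAdd a l) - X (Fin.castAdd b k)) ^ (m - 1))
    else 0

lemma isShuffle_iff {a b : ℕ} (π : Equiv.Perm (Fin (a + b))) :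
    IsShuffle a b π ↔ StrictMono (fun i => π (Fin.castAdd b i)) ∧
      StrictMono (fun i => π (Fin.natAdd a i)) :=
  Iff.rfl


namespace HallAux

/-- Fin.natAdd is injective -/
lemma natAdd_inj {p q : ℕ} : Function.Injective (Fin.natAdd p : Fin q → Fin (p + q)) :=
  fun i j h => by
    have := congrArg Fin.val h
    simp only [Fin.coe_natAdd] at this
    exact Fin.ext (by omega)

/-- build a permutation of `Fin (p+q)` from maps on the two blocks -/
noncomputable def mkPerm {p q : ℕ} (u : Fin p → Fin (p + q)) (v : Fin q → Fin (p + q))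
    (hinj : Function.Injective (Sum.elim u v)) : Equiv.Perm (Fin (p + q)) :=
  Equiv.ofBijective (Sum.elim u v ∘ finSumFinEquiv.symm)
    (Finite.injective_iff_bijective.mp (hinj.comp finSumFinEquiv.symm.injective))

@[simp] lemma mkPerm_castAdd {p q : ℕ} (u : Fin p → Fin (p + q)) (v : Fin q → Fin (p + q))
    (hinj) (k : Fin p) : mkPerm u v hinj (Fin.castAdd q k) = u k := by
  simp [mkPerm, Equiv.ofBijective_apply, finSumFinEquiv_symm_apply_castAdd]

@[simp] lemma mkPerm_natAdd {p q : ℕ} (u : Fin p → Fin (p + q)) (v : Fin q → Fin (p + q))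
    (hinj) (l : Fin q) : mkPerm u v hinj (Fin.natAdd p l) = v l := by
  simp [mkPerm, Equiv.ofBijective_apply, finSumFinEquiv_symm_apply_natAdd]

/-- extend a permutation of the first block by the identity -/
def permSumL {p : ℕ} (σ : Equiv.Perm (Fin p)) (q : ℕ) : Equiv.Perm (Fin (p + q)) :=
  finSumFinEquiv.symm.trans ((σ.sumCongr (Equiv.refl (Fin q))).trans finSumFinEquiv)

@[simp] lemma permSumL_castAdd {p q : ℕ} (σ : Equiv.Perm (Fin p)) (k : Fin p) :
    permSumL σ q (Fin.castAdd q k) = Fin.castAdd q (σ k) := by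
  simp [permSumL, finSumFinEquiv_symm_apply_castAdd]

@[simp] lemma permSumL_natAdd {p q : ℕ} (σ : Equiv.Perm (Fin p)) (l : Fin q) :
    permSumL σ q (Fin.natAdd p l) = Fin.natAdd p l := by
  simp [permSumL, finSumFinEquiv_symm_apply_natAdd]

/-- extend a permutation of the second block by the identity -/
def permSumR (p : ℕ) {q : ℕ} (τ : Equiv.Perm (Fin q)) : Equiv.Perm (Fin (p + q)) :=
  finSumFinEquiv.symm.trans (((Equiv.refl (Fin p)).sumCongr τ).trans finSumFinEquiv)

@[simp] lemma permSumR_castAdd {p q : ℕ} (τ : Equiv.Perm (Fin q)) (k : Fin p) :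
    permSumR p τ (Fin.castAdd q k) = Fin.castAdd q k := by
  simp [permSumR, finSumFinEquiv_symm_apply_castAdd]

@[simp] lemma permSumR_natAdd {p q : ℕ} (τ : Equiv.Perm (Fin q)) (l : Fin q) :
    permSumR p τ (Fin.natAdd p l) = Fin.natAdd p (τ l) := by
  simp [permSumR, finSumFinEquiv_symm_apply_natAdd]

/-- Two shuffles agreeing on the second block are equal. -/
lemma shuffle_unique_nat {p q : ℕ} {π₁ π₂ : Equiv.Perm (Fin (p + q))}
    (h1 : IsShuffle p q π₁) (h2 : IsShuffle p q π₂)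
    (hnat : ∀ l : Fin q, π₁ (Fin.natAdd p l) = π₂ (Fin.natAdd p l)) : π₁ = π₂ := by
  classical
  set s : Finset (Fin (p + q)) :=
    (Finset.image (fun l : Fin q => π₁ (Fin.natAdd p l)) Finset.univ)ᶜ with hs
  have himcard : (Finset.image (fun l : Fin q => π₁ (Fin.natAdd p l)) Finset.univ).card = q := by
    rw [show (fun l : Fin q => π₁ (Fin.natAdd p l)) = π₁ ∘ Fin.natAdd p from rfl,
      Finset.card_image_of_injective _ (π₁.injective.comp natAdd_inj)]
    simp
  have hcard : s.card = p := by
    rw [hs, Finset.card_compl, himcard]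
    simp
  have key : ∀ (π : Equiv.Perm (Fin (p + q))), IsShuffle p q π →
      (∀ l : Fin q, π (Fin.natAdd p l) = π₁ (Fin.natAdd p l)) →
      (fun k : Fin p => π (Fin.castAdd q k)) = s.orderEmbOfFin hcard := by
    intro π hπ hπnat
    apply Finset.orderEmbOfFin_unique hcard
    · intro k
      rw [hs, Finset.mem_compl]
      intro hk
      obtain ⟨l, _, hl⟩ := Finset.mem_image.mp hk
      rw [← hπnat l] at hl
      have := π.injective hl
      have := congrArg Fin.val this
      simp only [Fin.coe_natAdd, Fin.coe_castAdd] at this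
      have := k.isLt
      omega
    · exact hπ.1
  have e1 := key π₁ h1 (fun l => rfl)
  have e2 := key π₂ h2 (fun l => (hnat l).symm)
  apply Equiv.ext
  intro x
  refine Fin.addCases (fun k => ?_) (fun l => hnat l) x
  have := congrFun (e1.trans e2.symm) k
  exact this

/-- Two shuffles agreeing on the first block are equal. -/
lemma shuffle_unique_cast {p q : ℕ} {π₁ π₂ : Equiv.Perm (Fin (p + q))}
    (h1 : IsShuffle p q π₁) (h2 : IsShuffle p q π₂)
    (hcast : ∀ k : Fin p, π₁ (Fin.castAdd q k) = π₂ (Fin.castAdd q k)) : π₁ = π₂ := by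
  classical
  set s : Finset (Fin (p + q)) :=
    (Finset.image (fun k : Fin p => π₁ (Fin.castAdd q k)) Finset.univ)ᶜ with hs
  have himcard : (Finset.image (fun k : Fin p => π₁ (Fin.castAdd q k)) Finset.univ).card = p := by
    rw [show (fun k : Fin p => π₁ (Fin.castAdd q k)) = π₁ ∘ Fin.castAdd q from rfl,
      Finset.card_image_of_injective _ (π₁.injective.comp (Fin.castAdd_injective p q))]
    simp
  have hcard : s.card = q := by
    rw [hs, Finset.card_compl, himcard]
    simp
  have key : ∀ (π : Equiv.Perm (Fin (p + q))), IsShuffle p q π →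
      (∀ k : Fin p, π (Fin.castAdd q k) = π₁ (Fin.castAdd q k)) →
      (fun l : Fin q => π (Fin.natAdd p l)) = s.orderEmbOfFin hcard := by
    intro π hπ hπcast
    apply Finset.orderEmbOfFin_unique hcard
    · intro l
      rw [hs, Finset.mem_compl]
      intro hk
      obtain ⟨k, _, hk'⟩ := Finset.mem_image.mp hk
      rw [← hπcast k] at hk'
      have := π.injective hk'
      have := congrArg Fin.val this
      simp only [Fin.coe_natAdd, Fin.coe_castAdd] at this
      have := k.isLt
      omega
    · exact hπ.2
  have e1 := key π₁ h1 (fun l => rfl)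
  have e2 := key π₂ h2 (fun k => (hcast k).symm)
  apply Equiv.ext
  intro x
  refine Fin.addCases (fun k => hcast k) (fun l => ?_) x
  exact congrFun (e1.trans e2.symm) l

end HallAux
namespace HallAux

section Decomp

variable {p q : ℕ} (w : Equiv.Perm (Fin (p + q)))

/-- The complement of the image of the second block under `w`. -/
noncomputable def decS : Finset (Fin (p + q)) :=
  (Finset.image (fun l : Fin q => w (Fin.natAdd p l)) Finset.univ)ᶜ

lemma decS_card : (decS w).card = p := by
  rw [decS, Finset.card_compl,
    show (fun l : Fin q => w (Fin.natAdd p l)) = w ∘ Fin.natAdd p from rfl,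
    Finset.card_image_of_injective _ (w.injective.comp natAdd_inj)]
  simp

lemma mem_decS (k : Fin p) : w (Fin.castAdd q k) ∈ decS w := by
  rw [decS, Finset.mem_compl]
  intro hk
  obtain ⟨l, _, hl⟩ := Finset.mem_image.mp hk
  have := congrArg Fin.val (w.injective hl)
  simp only [Fin.coe_natAdd, Fin.coe_castAdd] at this
  have := k.isLt
  omega

lemma decInj : Function.Injective
    (Sum.elim (fun k : Fin p => ((decS w).orderEmbOfFin (decS_card w) k : Fin (p + q)))
      (fun l : Fin q => w (Fin.natAdd p l))) := by
  intro x y hxy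
  match x, y with
  | Sum.inl k, Sum.inl k' =>
    simp only [Sum.elim_inl] at hxy
    exact congrArg Sum.inl (((decS w).orderEmbOfFin (decS_card w)).injective hxy)
  | Sum.inl k, Sum.inr l =>
    exfalso
    simp only [Sum.elim_inl, Sum.elim_inr] at hxy
    have h1 : ((decS w).orderEmbOfFin (decS_card w) k : Fin (p + q)) ∈ decS w :=
      Finset.orderEmbOfFin_mem _ _ _
    rw [hxy, decS, Finset.mem_compl] at h1
    exact h1 (Finset.mem_image.mpr ⟨l, Finset.mem_univ l, rfl⟩)
  | Sum.inr l, Sum.inl k =>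
    exfalso
    simp only [Sum.elim_inl, Sum.elim_inr] at hxy
    have h1 : ((decS w).orderEmbOfFin (decS_card w) k : Fin (p + q)) ∈ decS w :=
      Finset.orderEmbOfFin_mem _ _ _
    rw [← hxy, decS, Finset.mem_compl] at h1
    exact h1 (Finset.mem_image.mpr ⟨l, Finset.mem_univ l, rfl⟩)
  | Sum.inr l, Sum.inr l' =>
    simp only [Sum.elim_inr] at hxy
    exact congrArg Sum.inr (natAdd_inj (w.injective hxy))

/-- The shuffle part of the left decomposition of `w`. -/
noncomputable def decPi : Equiv.Perm (Fin (p + q)) :=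
  mkPerm _ _ (decInj w)

lemma decPi_natAdd (l : Fin q) : decPi w (Fin.natAdd p l) = w (Fin.natAdd p l) := by
  simp [decPi]

lemma decPi_castAdd (k : Fin p) :
    decPi w (Fin.castAdd q k) = ((decS w).orderEmbOfFin (decS_card w) k : Fin (p + q)) := by
  simp [decPi]

/-- The inner permutation of the left decomposition of `w`. -/
noncomputable def decSigma : Equiv.Perm (Fin p) :=
  Equiv.ofBijective
    (fun k => ((decS w).orderIsoOfFin (decS_card w)).symm ⟨w (Fin.castAdd q k), mem_decS w k⟩)
    (Finite.injective_iff_bijective.mp (by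
      intro x y hxy
      have := ((decS w).orderIsoOfFin (decS_card w)).symm.injective hxy
      exact (Fin.castAdd_injective p q) (w.injective (by simpa using Subtype.ext_iff.mp this))))

lemma decPi_castAdd_decSigma (k : Fin p) :
    decPi w (Fin.castAdd q (decSigma w k)) = w (Fin.castAdd q k) := by
  rw [decPi_castAdd]
  show (((decS w).orderIsoOfFin (decS_card w)) (decSigma w k) : Fin (p + q)) = _
  rw [decSigma]
  simp [Equiv.ofBijective_apply]

lemma decPi_comp_permSumL : (decPi w) ∘ (permSumL (decSigma w) q) = w := by
  funext x
  refine Fin.addCases (fun k => ?_) (fun l => ?_) x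
  · simp only [Function.comp_apply, permSumL_castAdd]
    exact decPi_castAdd_decSigma w k
  · simp only [Function.comp_apply, permSumL_natAdd]
    exact decPi_natAdd w l

lemma decSigma_lt_iff (k k' : Fin p) :
    decSigma w k < decSigma w k' ↔ w (Fin.castAdd q k) < w (Fin.castAdd q k') := by
  rw [← decPi_castAdd_decSigma w k, ← decPi_castAdd_decSigma w k']
  constructor
  · intro hlt
    rw [decPi_castAdd, decPi_castAdd]
    exact ((decS w).orderEmbOfFin (decS_card w)).strictMono hlt
  · intro hlt
    rw [decPi_castAdd, decPi_castAdd] at hlt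
    exact ((decS w).orderEmbOfFin (decS_card w)).lt_iff_lt.mp hlt

lemma decPi_isShuffle (hw : StrictMono (fun l : Fin q => w (Fin.natAdd p l))) :
    IsShuffle p q (decPi w) := by
  constructor
  · intro i j hij
    rw [decPi_castAdd, decPi_castAdd]
    exact_mod_cast ((decS w).orderEmbOfFin (decS_card w)).strictMono hij
  · intro i j hij
    rw [decPi_natAdd, decPi_natAdd]
    exact hw hij

/-- Right decomposition: complement of the image of the first block. -/
noncomputable def decT : Finset (Fin (p + q)) :=
  (Finset.image (fun k : Fin p => w (Fin.castAdd q k)) Finset.univ)ᶜ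

lemma decT_card : (decT w).card = q := by
  rw [decT, Finset.card_compl,
    show (fun k : Fin p => w (Fin.castAdd q k)) = w ∘ Fin.castAdd q from rfl,
    Finset.card_image_of_injective _ (w.injective.comp (Fin.castAdd_injective p q))]
  simp

lemma mem_decT (l : Fin q) : w (Fin.natAdd p l) ∈ decT w := by
  rw [decT, Finset.mem_compl]
  intro hk
  obtain ⟨k, _, hl⟩ := Finset.mem_image.mp hk
  have := congrArg Fin.val (w.injective hl)
  simp only [Fin.coe_natAdd, Fin.coe_castAdd] at this
  have := k.isLt
  omega

lemma decInjR : Function.Injective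
    (Sum.elim (fun k : Fin p => w (Fin.castAdd q k))
      (fun l : Fin q => ((decT w).orderEmbOfFin (decT_card w) l : Fin (p + q)))) := by
  intro x y hxy
  match x, y with
  | Sum.inl k, Sum.inl k' =>
    simp only [Sum.elim_inl] at hxy
    exact congrArg Sum.inl ((Fin.castAdd_injective p q) (w.injective hxy))
  | Sum.inl k, Sum.inr l =>
    exfalso
    simp only [Sum.elim_inl, Sum.elim_inr] at hxy
    have h1 : ((decT w).orderEmbOfFin (decT_card w) l : Fin (p + q)) ∈ decT w :=
      Finset.orderEmbOfFin_mem _ _ _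
    rw [← hxy, decT, Finset.mem_compl] at h1
    exact h1 (Finset.mem_image.mpr ⟨k, Finset.mem_univ k, rfl⟩)
  | Sum.inr l, Sum.inl k =>
    exfalso
    simp only [Sum.elim_inl, Sum.elim_inr] at hxy
    have h1 : ((decT w).orderEmbOfFin (decT_card w) l : Fin (p + q)) ∈ decT w :=
      Finset.orderEmbOfFin_mem _ _ _
    rw [hxy, decT, Finset.mem_compl] at h1
    exact h1 (Finset.mem_image.mpr ⟨k, Finset.mem_univ k, rfl⟩)
  | Sum.inr l, Sum.inr l' =>
    simp only [Sum.elim_inr] at hxy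
    exact congrArg Sum.inr (((decT w).orderEmbOfFin (decT_card w)).injective hxy)

/-- The shuffle part of the right decomposition of `w`. -/
noncomputable def decPiR : Equiv.Perm (Fin (p + q)) :=
  mkPerm _ _ (decInjR w)

lemma decPiR_castAdd (k : Fin p) : decPiR w (Fin.castAdd q k) = w (Fin.castAdd q k) := by
  simp [decPiR]

lemma decPiR_natAdd (l : Fin q) :
    decPiR w (Fin.natAdd p l) = ((decT w).orderEmbOfFin (decT_card w) l : Fin (p + q)) := by
  simp [decPiR]

/-- The inner permutation of the right decomposition of `w`. -/
noncomputable def decTau : Equiv.Perm (Fin q) :=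
  Equiv.ofBijective
    (fun l => ((decT w).orderIsoOfFin (decT_card w)).symm ⟨w (Fin.natAdd p l), mem_decT w l⟩)
    (Finite.injective_iff_bijective.mp (by
      intro x y hxy
      have := ((decT w).orderIsoOfFin (decT_card w)).symm.injective hxy
      exact natAdd_inj (w.injective (by simpa using Subtype.ext_iff.mp this))))

lemma decPiR_natAdd_decTau (l : Fin q) :
    decPiR w (Fin.natAdd p (decTau w l)) = w (Fin.natAdd p l) := by
  rw [decPiR_natAdd]
  show (((decT w).orderIsoOfFin (decT_card w)) (decTau w l) : Fin (p + q)) = _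
  rw [decTau]
  simp [Equiv.ofBijective_apply]

lemma decPiR_comp_permSumR : (decPiR w) ∘ (permSumR p (decTau w)) = w := by
  funext x
  refine Fin.addCases (fun k => ?_) (fun l => ?_) x
  · simp only [Function.comp_apply, permSumR_castAdd]
    exact decPiR_castAdd w k
  · simp only [Function.comp_apply, permSumR_natAdd]
    exact decPiR_natAdd_decTau w l

lemma decTau_lt_iff (l l' : Fin q) :
    decTau w l < decTau w l' ↔ w (Fin.natAdd p l) < w (Fin.natAdd p l') := by
  rw [← decPiR_natAdd_decTau w l, ← decPiR_natAdd_decTau w l']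
  constructor
  · intro hlt
    rw [decPiR_natAdd, decPiR_natAdd]
    exact ((decT w).orderEmbOfFin (decT_card w)).strictMono hlt
  · intro hlt
    rw [decPiR_natAdd, decPiR_natAdd] at hlt
    exact ((decT w).orderEmbOfFin (decT_card w)).lt_iff_lt.mp hlt

lemma decPiR_isShuffle (hw : StrictMono (fun k : Fin p => w (Fin.castAdd q k))) :
    IsShuffle p q (decPiR w) := by
  constructor
  · intro i j hij
    rw [decPiR_castAdd, decPiR_castAdd]
    exact hw hij
  · intro i j hij
    rw [decPiR_natAdd, decPiR_natAdd]
    exact_mod_cast ((decT w).orderEmbOfFin (decT_card w)).strictMono hij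

end Decomp

end HallAux
namespace HallAux

section Tri

variable {a b c : ℕ}

/-- The associativity equivalence. -/
def eA (a b c : ℕ) : Fin ((a + b) + c) ≃ Fin (a + (b + c)) := finCongr (Nat.add_assoc a b c)

lemma eA_strictMono : StrictMono (eA a b c) := fun i j hij => by
  rw [Fin.lt_def] at hij ⊢
  simpa only [eA, finCongr_apply, Fin.coe_cast] using hij

lemma eA_symm_strictMono : StrictMono (eA a b c).symm := fun i j hij => by
  rw [Fin.lt_def] at hij ⊢
  simpa only [eA, finCongr_symm, finCongr_apply, Fin.coe_cast] using hij

lemma eA_cc (k : Fin a) :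
    eA a b c (Fin.castAdd c (Fin.castAdd b k)) = Fin.castAdd (b + c) k := by
  apply Fin.ext; simp [eA]

lemma eA_cn (k : Fin b) :
    eA a b c (Fin.castAdd c (Fin.natAdd a k)) = Fin.natAdd a (Fin.castAdd c k) := by
  apply Fin.ext; simp [eA]

lemma eA_n (k : Fin c) :
    eA a b c (Fin.natAdd (a + b) k) = Fin.natAdd a (Fin.natAdd b k) := by
  apply Fin.ext; simp [eA]; omega

lemma eA_symm_c (k : Fin a) :
    (eA a b c).symm (Fin.castAdd (b + c) k) = Fin.castAdd c (Fin.castAdd b k) := by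
  rw [← eA_cc k, Equiv.symm_apply_apply]

lemma eA_symm_nc (k : Fin b) :
    (eA a b c).symm (Fin.natAdd a (Fin.castAdd c k)) = Fin.castAdd c (Fin.natAdd a k) := by
  rw [← eA_cn k, Equiv.symm_apply_apply]

lemma eA_symm_nn (k : Fin c) :
    (eA a b c).symm (Fin.natAdd a (Fin.natAdd b k)) = Fin.natAdd (a + b) k := by
  rw [← eA_n k, Equiv.symm_apply_apply]

/-- Triple shuffles. -/
def IsTri (a b c : ℕ) (ρ : Equiv.Perm (Fin (a + (b + c)))) : Prop :=
  StrictMono (fun i : Fin a => ρ (Fin.castAdd (b + c) i)) ∧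
  StrictMono (fun i : Fin b => ρ (Fin.natAdd a (Fin.castAdd c i))) ∧
  StrictMono (fun i : Fin c => ρ (Fin.natAdd a (Fin.natAdd b i)))

/-- Composition map from the left. -/
def iL (π : Equiv.Perm (Fin ((a + b) + c))) (σ : Equiv.Perm (Fin (a + b))) :
    Equiv.Perm (Fin (a + (b + c))) :=
  (eA a b c).symm.trans ((permSumL σ c).trans (π.trans (eA a b c)))

lemma iL_apply (π : Equiv.Perm (Fin ((a + b) + c))) (σ : Equiv.Perm (Fin (a + b)))
    (x : Fin (a + (b + c))) :
    iL π σ x = eA a b c (π (permSumL σ c ((eA a b c).symm x))) := rfl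

/-- Composition map from the right. -/
def iR (π : Equiv.Perm (Fin (a + (b + c)))) (τ : Equiv.Perm (Fin (b + c))) :
    Equiv.Perm (Fin (a + (b + c))) :=
  (permSumR a τ).trans π

lemma iR_apply (π : Equiv.Perm (Fin (a + (b + c)))) (τ : Equiv.Perm (Fin (b + c)))
    (x : Fin (a + (b + c))) : iR π τ x = π (permSumR a τ x) := rfl

/-- Conjugation by the associativity equivalence. -/
def conjL (ρ : Equiv.Perm (Fin (a + (b + c)))) : Equiv.Perm (Fin ((a + b) + c)) :=
  (eA a b c).trans (ρ.trans (eA a b c).symm)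

lemma conjL_apply (ρ : Equiv.Perm (Fin (a + (b + c)))) (x : Fin ((a + b) + c)) :
    conjL ρ x = (eA a b c).symm (ρ (eA a b c x)) := rfl

lemma iL_isTri {π : Equiv.Perm (Fin ((a + b) + c))} {σ : Equiv.Perm (Fin (a + b))}
    (hπ : IsShuffle (a + b) c π) (hσ : IsShuffle a b σ) : IsTri a b c (iL π σ) := by
  refine ⟨fun i j hij => ?_, fun i j hij => ?_, fun i j hij => ?_⟩
  · simp only [iL_apply, eA_symm_c, permSumL_castAdd]
    exact eA_strictMono (hπ.1 _ _ (hσ.1 _ _ hij))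
  · simp only [iL_apply, eA_symm_nc, permSumL_castAdd]
    exact eA_strictMono (hπ.1 _ _ (hσ.2 _ _ hij))
  · simp only [iL_apply, eA_symm_nn, permSumL_natAdd]
    exact eA_strictMono (hπ.2 _ _ hij)

lemma iR_isTri {π : Equiv.Perm (Fin (a + (b + c)))} {τ : Equiv.Perm (Fin (b + c))}
    (hπ : IsShuffle a (b + c) π) (hτ : IsShuffle b c τ) : IsTri a b c (iR π τ) := by
  refine ⟨fun i j hij => ?_, fun i j hij => ?_, fun i j hij => ?_⟩
  · simp only [iR_apply, permSumR_castAdd]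
    exact hπ.1 _ _ hij
  · simp only [iR_apply, permSumR_natAdd]
    exact hπ.2 _ _ (hτ.1 _ _ hij)
  · simp only [iR_apply, permSumR_natAdd]
    exact hπ.2 _ _ (hτ.2 _ _ hij)

lemma conjL_natAdd_strictMono {ρ : Equiv.Perm (Fin (a + (b + c)))} (hρ : IsTri a b c ρ) :
    StrictMono (fun l : Fin c => conjL ρ (Fin.natAdd (a + b) l)) := by
  intro i j hij
  simp only [conjL_apply, eA_n]
  exact eA_symm_strictMono (hρ.2.2 hij)

lemma decPi_conjL_isShuffle {ρ : Equiv.Perm (Fin (a + (b + c)))} (hρ : IsTri a b c ρ) :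
    IsShuffle (a + b) c (decPi (conjL ρ)) :=
  decPi_isShuffle _ (conjL_natAdd_strictMono hρ)

lemma decSigma_conjL_isShuffle {ρ : Equiv.Perm (Fin (a + (b + c)))} (hρ : IsTri a b c ρ) :
    IsShuffle a b (decSigma (conjL ρ)) := by
  constructor
  · intro i j hij
    rw [decSigma_lt_iff]
    simp only [conjL_apply, eA_cc]
    exact eA_symm_strictMono (hρ.1 hij)
  · intro i j hij
    rw [decSigma_lt_iff]
    simp only [conjL_apply, eA_cn]
    exact eA_symm_strictMono (hρ.2.1 hij)

lemma decPiR_isShuffle' {ρ : Equiv.Perm (Fin (a + (b + c)))} (hρ : IsTri a b c ρ) :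
    IsShuffle a (b + c) (decPiR ρ) :=
  decPiR_isShuffle ρ hρ.1

lemma decTau_isShuffle {ρ : Equiv.Perm (Fin (a + (b + c)))} (hρ : IsTri a b c ρ) :
    IsShuffle b c (decTau ρ) := by
  constructor
  · intro i j hij
    rw [decTau_lt_iff]
    exact hρ.2.1 hij
  · intro i j hij
    rw [decTau_lt_iff]
    exact hρ.2.2 hij

lemma iL_dec (ρ : Equiv.Perm (Fin (a + (b + c)))) :
    iL (decPi (conjL ρ)) (decSigma (conjL ρ)) = ρ := by
  apply Equiv.ext
  intro x
  rw [iL_apply]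
  have := congrFun (decPi_comp_permSumL (conjL ρ)) ((eA a b c).symm x)
  simp only [Function.comp_apply] at this
  rw [this, conjL_apply, Equiv.apply_symm_apply, Equiv.apply_symm_apply]

lemma iR_dec (ρ : Equiv.Perm (Fin (a + (b + c)))) :
    iR (decPiR ρ) (decTau ρ) = ρ := by
  apply Equiv.ext
  intro x
  rw [iR_apply]
  have := congrFun (decPiR_comp_permSumR ρ) x
  simpa using this

lemma conjL_iL (π : Equiv.Perm (Fin ((a + b) + c))) (σ : Equiv.Perm (Fin (a + b))) :
    conjL (iL π σ) = (permSumL σ c).trans π := by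
  apply Equiv.ext
  intro x
  simp [conjL_apply, iL_apply]

lemma dec_iL {π : Equiv.Perm (Fin ((a + b) + c))} {σ : Equiv.Perm (Fin (a + b))}
    (hπ : IsShuffle (a + b) c π) (hσ : IsShuffle a b σ) :
    decPi (conjL (iL π σ)) = π ∧ decSigma (conjL (iL π σ)) = σ := by
  rw [conjL_iL]
  set w : Equiv.Perm (Fin ((a + b) + c)) := (permSumL σ c).trans π with hw
  have hwnat : ∀ l : Fin c, w (Fin.natAdd (a + b) l) = π (Fin.natAdd (a + b) l) := by
    intro l; simp [hw]
  have hπw : decPi w = π := by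
    apply shuffle_unique_nat (decPi_isShuffle w ?_) hπ
    · intro l
      rw [decPi_natAdd, hwnat]
    · intro i j hij
      simp only [hwnat]
      exact hπ.2 _ _ hij
  refine ⟨hπw, ?_⟩
  apply Equiv.ext
  intro k
  have h1 : decPi w (Fin.castAdd c (decSigma w k)) = w (Fin.castAdd c k) :=
    decPi_castAdd_decSigma w k
  have h2 : w (Fin.castAdd c k) = π (Fin.castAdd c (σ k)) := by simp [hw]
  rw [hπw, h2] at h1
  exact Fin.castAdd_injective _ _ (π.injective h1)

lemma dec_iR {π : Equiv.Perm (Fin (a + (b + c)))} {τ : Equiv.Perm (Fin (b + c))}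
    (hπ : IsShuffle a (b + c) π) (hτ : IsShuffle b c τ) :
    decPiR (iR π τ) = π ∧ decTau (iR π τ) = τ := by
  set w : Equiv.Perm (Fin (a + (b + c))) := iR π τ with hw
  have hwcast : ∀ k : Fin a, w (Fin.castAdd (b + c) k) = π (Fin.castAdd (b + c) k) := by
    intro k; simp [hw, iR_apply]
  have hπw : decPiR w = π := by
    apply shuffle_unique_cast (decPiR_isShuffle w ?_) hπ
    · intro k
      rw [decPiR_castAdd, hwcast]
    · intro i j hij
      simp only [hwcast]
      exact hπ.1 _ _ hij
  refine ⟨hπw, ?_⟩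
  apply Equiv.ext
  intro l
  have h1 : decPiR w (Fin.natAdd a (decTau w l)) = w (Fin.natAdd a l) :=
    decPiR_natAdd_decTau w l
  have h2 : w (Fin.natAdd a l) = π (Fin.natAdd a (τ l)) := by simp [hw, iR_apply]
  rw [hπw, h2] at h1
  exact natAdd_inj (π.injective h1)

variable {M : Type*} [AddCommMonoid M]

lemma sum_tri_L (F : Equiv.Perm (Fin (a + (b + c))) → M) :
    (∑ π : Equiv.Perm (Fin ((a + b) + c)), ∑ σ : Equiv.Perm (Fin (a + b)),
      if IsShuffle (a + b) c π ∧ IsShuffle a b σ then F (iL π σ) else 0)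
    = ∑ ρ : Equiv.Perm (Fin (a + (b + c))), if IsTri a b c ρ then F ρ else 0 := by
  classical
  rw [← Finset.sum_product', ← Finset.sum_filter, ← Finset.sum_filter]
  refine Finset.sum_nbij' (fun x => iL x.1 x.2)
    (fun ρ => (decPi (conjL ρ), decSigma (conjL ρ))) ?_ ?_ ?_ ?_ ?_
  · intro x hx
    have hx' := (Finset.mem_filter.mp hx).2
    exact Finset.mem_filter.mpr ⟨Finset.mem_univ _, iL_isTri hx'.1 hx'.2⟩
  · intro ρ hρ
    have hρ' := (Finset.mem_filter.mp hρ).2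
    exact Finset.mem_filter.mpr ⟨Finset.mem_product.mpr ⟨Finset.mem_univ _, Finset.mem_univ _⟩,
      decPi_conjL_isShuffle hρ', decSigma_conjL_isShuffle hρ'⟩
  · intro x hx
    have hx' := (Finset.mem_filter.mp hx).2
    obtain ⟨h1, h2⟩ := dec_iL hx'.1 hx'.2
    exact Prod.ext h1 h2
  · intro ρ _
    exact iL_dec ρ
  · intro x _
    rfl

lemma sum_tri_R (F : Equiv.Perm (Fin (a + (b + c))) → M) :
    (∑ π : Equiv.Perm (Fin (a + (b + c))), ∑ τ : Equiv.Perm (Fin (b + c)),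
      if IsShuffle a (b + c) π ∧ IsShuffle b c τ then F (iR π τ) else 0)
    = ∑ ρ : Equiv.Perm (Fin (a + (b + c))), if IsTri a b c ρ then F ρ else 0 := by
  classical
  rw [← Finset.sum_product', ← Finset.sum_filter, ← Finset.sum_filter]
  refine Finset.sum_nbij' (fun x => iR x.1 x.2)
    (fun ρ => (decPiR ρ, decTau ρ)) ?_ ?_ ?_ ?_ ?_
  · intro x hx
    have hx' := (Finset.mem_filter.mp hx).2
    exact Finset.mem_filter.mpr ⟨Finset.mem_univ _, iR_isTri hx'.1 hx'.2⟩
  · intro ρ hρ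
    have hρ' := (Finset.mem_filter.mp hρ).2
    exact Finset.mem_filter.mpr ⟨Finset.mem_product.mpr ⟨Finset.mem_univ _, Finset.mem_univ _⟩,
      decPiR_isShuffle' hρ', decTau_isShuffle hρ'⟩
  · intro x hx
    have hx' := (Finset.mem_filter.mp hx).2
    obtain ⟨h1, h2⟩ := dec_iR hx'.1 hx'.2
    exact Prod.ext h1 h2
  · intro ρ _
    exact iR_dec ρ
  · intro x _
    rfl

end Tri

end HallAux
namespace HallAux

/-- The kernel factor in the shuffle product. -/
noncomputable def Kker (m p q : ℕ) : MvPolynomial (Fin (p + q)) ℚ :=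
  ∏ l : Fin q, ∏ k : Fin p, (X (Fin.natAdd p l) - X (Fin.castAdd q k)) ^ (m - 1)

lemma Kker_def (m p q : ℕ) :
    Kker m p q
      = ∏ l : Fin q, ∏ k : Fin p, (X (Fin.natAdd p l) - X (Fin.castAdd q k)) ^ (m - 1) := rfl

lemma hallMul_def (m : ℕ) {p q : ℕ} (f : MvPolynomial (Fin p) ℚ)
    (g : MvPolynomial (Fin q) ℚ) :
    hallMul m f g = ∑ π : Equiv.Perm (Fin (p + q)),
      if IsShuffle p q π then
        rename π (rename (Fin.castAdd q) f * rename (Fin.natAdd p) g * Kker m p q)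
      else 0 := rfl

lemma Kker_permSumL {m p q : ℕ} (σ : Equiv.Perm (Fin p)) :
    rename (permSumL σ q) (Kker m p q) = Kker m p q := by
  rw [Kker_def, map_prod]
  simp only [map_prod, map_pow, map_sub, rename_X, permSumL_natAdd, permSumL_castAdd]
  refine Finset.prod_congr rfl fun l _ => ?_
  exact Equiv.prod_comp σ (fun k => (X (Fin.natAdd p l) - X (Fin.castAdd q k)) ^ (m - 1))

lemma Kker_permSumR {m p q : ℕ} (τ : Equiv.Perm (Fin q)) :
    rename (permSumR p τ) (Kker m p q) = Kker m p q := by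
  rw [Kker_def, map_prod]
  simp only [map_prod, map_pow, map_sub, rename_X, permSumR_natAdd, permSumR_castAdd]
  exact Equiv.prod_comp τ (fun l => ∏ k : Fin p,
    (X (Fin.natAdd p l) - X (Fin.castAdd q k)) ^ (m - 1))

lemma permSumL_rename_natAdd {p q : ℕ} (σ : Equiv.Perm (Fin p)) (x : MvPolynomial (Fin q) ℚ) :
    rename (permSumL σ q) (rename (Fin.natAdd p) x) = rename (Fin.natAdd p) x := by
  rw [rename_rename]
  have hc : ⇑(permSumL σ q) ∘ Fin.natAdd p = (Fin.natAdd p : Fin q → Fin (p + q)) := by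
    funext k; simp
  rw [hc]

lemma permSumR_rename_castAdd {p q : ℕ} (τ : Equiv.Perm (Fin q)) (x : MvPolynomial (Fin p) ℚ) :
    rename (permSumR p τ) (rename (Fin.castAdd q) x) = rename (Fin.castAdd q) x := by
  rw [rename_rename]
  have hc : ⇑(permSumR p τ) ∘ Fin.castAdd q = (Fin.castAdd q : Fin p → Fin (p + q)) := by
    funext k; simp
  rw [hc]

lemma permSumL_rename_castAdd {p q : ℕ} (σ : Equiv.Perm (Fin p)) (x : MvPolynomial (Fin p) ℚ) :
    rename (Fin.castAdd q) (rename σ x) = rename (permSumL σ q) (rename (Fin.castAdd q) x) := by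
  rw [rename_rename, rename_rename]
  have hc : Fin.castAdd q ∘ ⇑σ = ⇑(permSumL σ q) ∘ Fin.castAdd q := by
    funext k; simp
  rw [hc]

lemma permSumR_rename_natAdd {p q : ℕ} (τ : Equiv.Perm (Fin q)) (x : MvPolynomial (Fin q) ℚ) :
    rename (Fin.natAdd p) (rename τ x) = rename (permSumR p τ) (rename (Fin.natAdd p) x) := by
  rw [rename_rename, rename_rename]
  have hc : Fin.natAdd p ∘ ⇑τ = ⇑(permSumR p τ) ∘ Fin.natAdd p := by
    funext k; simp
  rw [hc]

section Main

variable (m a b c : ℕ) (f : MvPolynomial (Fin a) ℚ) (g : MvPolynomial (Fin b) ℚ)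
  (h : MvPolynomial (Fin c) ℚ)

/-- The common "big" polynomial. -/
noncomputable def bigP : MvPolynomial (Fin (a + (b + c))) ℚ :=
  rename (Fin.castAdd (b + c)) f *
    rename (Fin.natAdd a)
      (rename (Fin.castAdd c) g * rename (Fin.natAdd b) h * Kker m b c) *
    Kker m a (b + c)

lemma coreW :
    rename (eA a b c)
      (rename (Fin.castAdd c)
          (rename (Fin.castAdd b) f * rename (Fin.natAdd a) g * Kker m a b) *
        rename (Fin.natAdd (a + b)) h * Kker m (a + b) c)
      = bigP m a b c f g h := by
  have split1 : (Kker m (a + b) c) =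
      (∏ l : Fin c, ∏ k : Fin a,
        (X (Fin.natAdd (a + b) l) - X (Fin.castAdd c (Fin.castAdd b k))) ^ (m - 1)) *
      (∏ l : Fin c, ∏ k : Fin b,
        (X (Fin.natAdd (a + b) l) - X (Fin.castAdd c (Fin.natAdd a k))) ^ (m - 1)) := by
    rw [Kker_def, ← Finset.prod_mul_distrib]
    refine Finset.prod_congr rfl fun l _ => ?_
    exact Fin.prod_univ_add _
  have split2 : (Kker m a (b + c)) =
      (∏ l : Fin b, ∏ k : Fin a,
        (X (Fin.natAdd a (Fin.castAdd c l)) - X (Fin.castAdd (b + c) k)) ^ (m - 1)) *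
      (∏ l : Fin c, ∏ k : Fin a,
        (X (Fin.natAdd a (Fin.natAdd b l)) - X (Fin.castAdd (b + c) k)) ^ (m - 1)) := by
    rw [Kker_def]
    exact Fin.prod_univ_add _
  rw [show bigP m a b c f g h = rename (Fin.castAdd (b + c)) f *
    rename (Fin.natAdd a)
      (rename (Fin.castAdd c) g * rename (Fin.natAdd b) h * Kker m b c) *
    Kker m a (b + c) from rfl, split1, split2, Kker_def m a b, Kker_def m b c]
  simp only [map_mul, rename_rename, map_prod, map_pow, map_sub, rename_X,
    Function.comp_apply, eA_cc, eA_cn, eA_n]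
  have hf : (⇑(eA a b c) ∘ Fin.castAdd c ∘ Fin.castAdd b) = (Fin.castAdd (b + c) : Fin a → _) := by
    funext k; exact eA_cc k
  have hg : (⇑(eA a b c) ∘ Fin.castAdd c ∘ Fin.natAdd a)
      = (fun k : Fin b => Fin.natAdd a (Fin.castAdd c k)) := by
    funext k; exact eA_cn k
  have hh : (⇑(eA a b c) ∘ Fin.natAdd (a + b))
      = (fun k : Fin c => Fin.natAdd a (Fin.natAdd b k)) := by
    funext k; exact eA_n k
  have hg' : (Fin.natAdd a ∘ Fin.castAdd c : Fin b → _)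
      = (fun k : Fin b => Fin.natAdd a (Fin.castAdd c k)) := rfl
  have hh' : (Fin.natAdd a ∘ Fin.natAdd b : Fin c → _)
      = (fun k : Fin c => Fin.natAdd a (Fin.natAdd b k)) := rfl
  rw [hf, hg, hh, hg', hh']
  ring

lemma innerL :
    rename (Fin.castAdd c) (hallMul m f g)
      = ∑ σ : Equiv.Perm (Fin (a + b)),
          if IsShuffle a b σ then
            rename (permSumL σ c)
              (rename (Fin.castAdd c)
                (rename (Fin.castAdd b) f * rename (Fin.natAdd a) g * Kker m a b))
          else 0 := by
  rw [hallMul_def, map_sum]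
  refine Finset.sum_congr rfl fun σ _ => ?_
  split_ifs
  · rw [permSumL_rename_castAdd]
  · simp

lemma innerR :
    rename (Fin.natAdd a) (hallMul m g h)
      = ∑ τ : Equiv.Perm (Fin (b + c)),
          if IsShuffle b c τ then
            rename (permSumR a τ)
              (rename (Fin.natAdd a)
                (rename (Fin.castAdd c) g * rename (Fin.natAdd b) h * Kker m b c))
          else 0 := by
  rw [hallMul_def, map_sum]
  refine Finset.sum_congr rfl fun τ _ => ?_
  split_ifs
  · rw [permSumR_rename_natAdd]
  · simp

lemma term_eq_L (π : Equiv.Perm (Fin ((a + b) + c))) (σ : Equiv.Perm (Fin (a + b))) :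
    rename (eA a b c)
      (rename π
        (rename (permSumL σ c)
            (rename (Fin.castAdd c)
              (rename (Fin.castAdd b) f * rename (Fin.natAdd a) g * Kker m a b)) *
          rename (Fin.natAdd (a + b)) h * Kker m (a + b) c))
      = rename (iL π σ) (bigP m a b c f g h) := by
  conv_lhs =>
    rw [← permSumL_rename_natAdd σ h, ← Kker_permSumL (m := m) σ, ← map_mul, ← map_mul]
  rw [rename_rename, rename_rename, ← coreW m a b c f g h, rename_rename]
  have hc : (⇑(eA a b c) ∘ ⇑π) ∘ ⇑(permSumL σ c) = ⇑(iL π σ) ∘ ⇑(eA a b c) := by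
    funext x
    simp only [Function.comp_apply, iL_apply, Equiv.symm_apply_apply]
  rw [hc]

lemma term_eq_R (π : Equiv.Perm (Fin (a + (b + c)))) (τ : Equiv.Perm (Fin (b + c))) :
    rename π
      (rename (Fin.castAdd (b + c)) f *
        rename (permSumR a τ)
          (rename (Fin.natAdd a)
            (rename (Fin.castAdd c) g * rename (Fin.natAdd b) h * Kker m b c)) *
        Kker m a (b + c))
      = rename (iR π τ) (bigP m a b c f g h) := by
  conv_lhs =>
    rw [← permSumR_rename_castAdd τ f, ← Kker_permSumR (m := m) τ, ← map_mul, ← map_mul]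
  rw [rename_rename]
  have hc : ⇑π ∘ ⇑(permSumR a τ) = ⇑(iR π τ) := by
    funext x
    simp only [Function.comp_apply, iR_apply]
  rw [hc]
  rfl

lemma lhs_eq :
    rename (eA a b c) (hallMul m (hallMul m f g) h)
      = ∑ π : Equiv.Perm (Fin ((a + b) + c)), ∑ σ : Equiv.Perm (Fin (a + b)),
          if IsShuffle (a + b) c π ∧ IsShuffle a b σ then
            rename (iL π σ) (bigP m a b c f g h)
          else 0 := by
  rw [hallMul_def, map_sum]
  refine Finset.sum_congr rfl fun π _ => ?_
  split_ifs with hπ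
  · rw [innerL, Finset.sum_mul, Finset.sum_mul, map_sum, map_sum]
    refine Finset.sum_congr rfl fun σ _ => ?_
    by_cases hσ : IsShuffle a b σ
    · rw [if_pos hσ, if_pos (show IsShuffle (a + b) c π ∧ IsShuffle a b σ from ⟨hπ, hσ⟩)]
      exact term_eq_L m a b c f g h π σ
    · rw [if_neg hσ, if_neg (fun hc => hσ hc.2)]
      simp
  · rw [map_zero]
    symm
    refine Finset.sum_eq_zero fun σ _ => ?_
    exact if_neg (fun hc => hπ hc.1)

lemma rhs_eq :
    hallMul m f (hallMul m g h)
      = ∑ π : Equiv.Perm (Fin (a + (b + c))), ∑ τ : Equiv.Perm (Fin (b + c)),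
          if IsShuffle a (b + c) π ∧ IsShuffle b c τ then
            rename (iR π τ) (bigP m a b c f g h)
          else 0 := by
  rw [hallMul_def]
  refine Finset.sum_congr rfl fun π _ => ?_
  split_ifs with hπ
  · rw [innerR, Finset.mul_sum, Finset.sum_mul, map_sum]
    refine Finset.sum_congr rfl fun τ _ => ?_
    by_cases hτ : IsShuffle b c τ
    · rw [if_pos hτ, if_pos (show IsShuffle a (b + c) π ∧ IsShuffle b c τ from ⟨hπ, hτ⟩)]
      exact term_eq_R m a b c f g h π τ
    · rw [if_neg hτ, if_neg (fun hc => hτ hc.2)]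
      simp
  · symm
    refine Finset.sum_eq_zero fun τ _ => ?_
    exact if_neg (fun hc => hπ hc.1)

end Main

end HallAux

/-- The shuffle product of the cohomological Hall algebra of the `m`-loop quiver is
associative (on symmetric polynomials). -/
theorem hallMul_assoc (m : ℕ) {a b c : ℕ}
    (f : MvPolynomial (Fin a) ℚ) (g : MvPolynomial (Fin b) ℚ)
    (h : MvPolynomial (Fin c) ℚ)
    (hf : f.IsSymmetric) (hg : g.IsSymmetric) (hh : h.IsSymmetric) :
    rename (finCongr (Nat.add_assoc a b c)) (hallMul m (hallMul m f g) h)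
      = hallMul m f (hallMul m g h) := by
  have key : rename (HallAux.eA a b c) (hallMul m (hallMul m f g) h)
      = hallMul m f (hallMul m g h) := by
    rw [HallAux.lhs_eq, HallAux.rhs_eq,
      HallAux.sum_tri_L (fun ρ => rename ρ (HallAux.bigP m a b c f g h)),
      HallAux.sum_tri_R (fun ρ => rename ρ (HallAux.bigP m a b c f g h))]
  exact key
end

section
/- The pushforward–pullback (Beck–Chevalley) identity holds for finitely supported functions on groupoids: given a (homotopy) Cartesian square of finite groupoids with X = Y ×_W Z, maps s' : X → Y, p' : X → Z, p : Y → W, s : Z → W, the equality s^* ∘ p_* = p'_* ∘ s'^* holds as linear maps Fun(π_0 Y, ℂ) → Fun(π_0 Z, ℂ), where the pushforward is (f_* φ)(b) = Σ_{x ∈ π_0(Rf^{-1}(b))} φ(x)/|Aut(x)| over the homotopy fiber. -/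
open CategoryTheory

/-- The weight of an object of a groupoid: `1/(#{y ≅ x} · |Aut x|)`; summing the weights
over an isomorphism class gives `1/|Aut|`, so that for an iso-invariant function `φ`,
`Σ_{x ∈ Obj} φ(x)·weight(x) = Σ_{[x] ∈ π₀} φ([x])/|Aut(x)|`. -/
noncomputable def gweight {G : Type*} [Category G] (x : G) : ℂ :=
  1 / ((Nat.card {y : G // Nonempty (x ≅ y)} : ℂ) * (Nat.card (x ≅ x) : ℂ))

/-- The pushforward of a function along a functor `F : A ⥤ B`:
`(F_* φ)(b) = Σ_{x ∈ π₀(F^{-1}(b))} φ(x)/|Aut(x)|`, the sum over the homotopy fiber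
`F^{-1}(b) = Comma F (fromPUnit b)`, written as a weighted sum over its objects. -/
noncomputable def push {A B : Type*} [Category A] [Category B] (F : A ⥤ B)
    (φ : A → ℂ) (b : B) : ℂ :=
  ∑ᶠ x : Comma F (Functor.fromPUnit.{0} b), φ x.left * gweight x

/-!
An object `(y, z', α : p y ⟶ s z', β : z' ⟶ z)` of the homotopy fibre of `Comma.snd p s`
over `z` is sent to `(y, α ≫ s β)` in the homotopy fibre of `p` over `s z`; since `Z` is a
groupoid, the pair `(z', β)` is unique up to unique isomorphism, so this is an equivalence.
The weighted sum `Σ_x φ(x) · gweight x` of an iso-invariant `φ` equals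
`Σ_{[x] ∈ π₀} φ(x) / |Aut x|`, hence is invariant under equivalences of finite categories.
-/

section Weighted

variable {C D : Type*} [Category C] [Category D]

instance {x y : C} [Finite (x ⟶ y)] : Finite (x ≅ y) :=
  Finite.of_injective Iso.hom fun _ _ h => Iso.ext h

lemma card_aut_congr {x y : C} (e : x ≅ y) : Nat.card (x ≅ x) = Nat.card (y ≅ y) :=
  Nat.card_congr (Iso.isoCongr e e)

lemma card_aut_map (F : C ⥤ D) [F.Full] [F.Faithful] (x : C) :
    Nat.card (F.obj x ≅ F.obj x) = Nat.card (x ≅ x) :=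
  (Nat.card_congr ((Functor.FullyFaithful.ofFullyFaithful F).isoEquiv)).symm

lemma gweight_congr {x y : C} (e : x ≅ y) : gweight x = gweight y := by
  have hclass : Nat.card {w : C // Nonempty (x ≅ w)} = Nat.card {w : C // Nonempty (y ≅ w)} :=
    Nat.card_congr <| Equiv.subtypeEquivRight fun w =>
      ⟨fun ⟨i⟩ => ⟨e.symm ≪≫ i⟩, fun ⟨i⟩ => ⟨e ≪≫ i⟩⟩
  rw [gweight, gweight, hclass, card_aut_congr e]

lemma card_isoClass_mul_gweight [Finite C] (x : C) [Finite (x ⟶ x)] :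
    (Nat.card {y : C // Nonempty (x ≅ y)} : ℂ) * gweight x = 1 / Nat.card (x ≅ x) := by
  have hclass : Nat.card {y : C // Nonempty (x ≅ y)} ≠ 0 :=
    Nat.card_ne_zero.2 ⟨⟨⟨x, ⟨Iso.refl x⟩⟩⟩, inferInstance⟩
  have haut : Nat.card (x ≅ x) ≠ 0 := Nat.card_ne_zero.2 ⟨⟨Iso.refl x⟩, inferInstance⟩
  rw [gweight]
  field_simp

instance [Finite C] : Finite (Skeleton C) :=
  Quotient.finite _

variable [Finite C] [∀ x y : C, Finite (x ⟶ y)]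

lemma finsum_mul_gweight_eq_finsum_skeleton (χ : C → ℂ)
    (hχ : ∀ x y : C, (x ≅ y) → χ x = χ y) :
    ∑ᶠ x : C, χ x * gweight x =
      ∑ᶠ c : Skeleton C, χ ((fromSkeleton C).obj c) /
        Nat.card ((fromSkeleton C).obj c ≅ (fromSkeleton C).obj c) := by
  classical
  have := Fintype.ofFinite C
  have := Fintype.ofFinite (Skeleton C)
  rw [finsum_eq_sum_of_fintype, finsum_eq_sum_of_fintype,
    ← Fintype.sum_fiberwise toSkeleton fun x => χ x * gweight x]
  refine Finset.sum_congr rfl fun c _ => ?_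
  set x₀ := (fromSkeleton C).obj c
  have hfiber (x : C) : toSkeleton x = c ↔ Nonempty (x₀ ≅ x) :=
    toSkeleton_eq_iff.trans ⟨fun ⟨i⟩ => ⟨i.symm⟩, fun ⟨i⟩ => ⟨i.symm⟩⟩
  have hconst (x : {x : C // toSkeleton x = c}) : χ x.1 * gweight x.1 = χ x₀ * gweight x₀ := by
    obtain ⟨i⟩ := (hfiber x).1 x.2
    rw [hχ _ _ i.symm, gweight_congr i.symm]
  have hcard :
      Fintype.card {x : C // toSkeleton x = c} = Nat.card {x : C // Nonempty (x₀ ≅ x)} := by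
    rw [← Nat.card_eq_fintype_card]
    exact Nat.card_congr (Equiv.subtypeEquivRight hfiber)
  rw [Finset.sum_congr rfl fun x _ => hconst x, Finset.sum_const, Finset.card_univ, hcard,
    nsmul_eq_mul, mul_left_comm, card_isoClass_mul_gweight, mul_one_div]

lemma finsum_mul_gweight_comp_of_isEquivalence [Finite D] [∀ x y : D, Finite (x ⟶ y)]
    (F : C ⥤ D) [F.IsEquivalence] (χ : D → ℂ) (hχ : ∀ x y : D, (x ≅ y) → χ x = χ y) :
    ∑ᶠ x : C, χ (F.obj x) * gweight x = ∑ᶠ y : D, χ y * gweight y := by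
  rw [finsum_mul_gweight_eq_finsum_skeleton _ fun x y i => hχ _ _ (F.mapIso i),
    finsum_mul_gweight_eq_finsum_skeleton χ hχ,
    ← finsum_comp_equiv F.asEquivalence.skeletonEquiv]
  refine finsum_congr fun c => ?_
  set x := (fromSkeleton C).obj c
  have e := fromSkeletonToSkeletonIso (F.obj x)
  rw [show F.asEquivalence.skeletonEquiv c = toSkeleton (F.obj x) from rfl, hχ _ _ e,
    card_aut_congr e, card_aut_map F]

end Weighted

abbrev hfiber {A B : Type*} [Category A] [Category B] (F : A ⥤ B) (b : B) : Type _ :=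
  Comma F (Functor.fromPUnit.{0} b)

section CommaFinite

variable {A B T : Type*} [Category A] [Category B] [Category T] (L : A ⥤ T) (R : B ⥤ T)

instance [Finite A] [Finite B] [∀ x y : T, Finite (x ⟶ y)] : Finite (Comma L R) :=
  Finite.of_equiv (Σ o : A × B, L.obj o.1 ⟶ R.obj o.2)
    { toFun := fun x => ⟨x.1.1, x.1.2, x.2⟩
      invFun := fun x => ⟨(x.left, x.right), x.hom⟩
      left_inv := fun _ => rfl
      right_inv := fun _ => rfl }

instance [∀ x y : A, Finite (x ⟶ y)] [∀ x y : B, Finite (x ⟶ y)] (x y : Comma L R) :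
    Finite (x ⟶ y) :=
  Finite.of_injective (fun f => (f.left, f.right)) fun _ _ h =>
    CommaMorphism.ext (congrArg Prod.fst h) (congrArg Prod.snd h)

end CommaFinite

section HFiberSnd

variable {Y Z W : Type*} [Category Y] [Groupoid Z] [Category W] (p : Y ⥤ W) (s : Z ⥤ W) (z : Z)

@[simps]
def hfiberSndFunctor : hfiber (Comma.snd p s) z ⥤ hfiber p (s.obj z) where
  obj x := ⟨x.left.left, x.right, x.left.hom ≫ s.map x.hom⟩
  map {x x'} f :=
    { left := f.left.left
      right := f.right
      w := by
        have hsq := f.left.w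
        have htri : f.left.right ≫ x'.hom = x.hom := by simpa using f.w
        dsimp
        rw [← htri, Functor.map_comp, reassoc_of% hsq]
        simp }

instance : (hfiberSndFunctor p s z).Faithful where
  map_injective {x x'} f f' h := by
    have htri : f.left.right ≫ x'.hom = x.hom := by simpa using f.w
    have htri' : f'.left.right ≫ x'.hom = x.hom := by simpa using f'.w
    have hR : f.left.right = f'.left.right := (cancel_mono x'.hom).1 (htri.trans htri'.symm)
    have hL := congrArg CommaMorphism.left h
    exact CommaMorphism.ext (CommaMorphism.ext hL hR) (Subsingleton.elim _ _)

instance : (hfiberSndFunctor p s z).Full where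
  map_surjective {x x'} g := by
    refine ⟨⟨⟨g.left, x.hom ≫ inv x'.hom, ?_⟩, g.right, ?_⟩, rfl⟩
    · dsimp
      rw [← cancel_mono (s.map x'.hom)]
      have hsq := g.w.trans (Category.comp_id _)
      simp only [Functor.const_obj_obj, hfiberSndFunctor_obj_hom, Category.assoc,
        Functor.map_comp, Functor.map_inv, IsIso.inv_hom_id, Category.comp_id] at hsq ⊢
      exact hsq
    · simp

instance : (hfiberSndFunctor p s z).EssSurj where
  mem_essImage x := ⟨⟨⟨x.left, z, x.hom⟩, x.right, 𝟙 z⟩,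
    ⟨Comma.isoMk (Iso.refl _) (Iso.refl _)
      (by change p.map (𝟙 x.left) ≫ x.hom = (x.hom ≫ s.map (𝟙 z)) ≫ 𝟙 _; simp)⟩⟩

instance : (hfiberSndFunctor p s z).IsEquivalence where

end HFiberSnd

/-- Beck–Chevalley for groupoids: for the homotopy Cartesian square with
`X = Y ×_W Z = Comma p s` (objects are triples `(y, z, α : p(y) ⟶ s(z))`, with `α`
invertible since `W` is a groupoid), projections `s' : X → Y`, `p' : X → Z`, and any
iso-invariant function `φ` on (π₀ of) `Y`, one has `s^*(p_* φ) = p'_*(s'^* φ)` as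
functions on (π₀ of) `Z`. -/
theorem beck_chevalley {Y Z W : Type*} [Groupoid Y] [Groupoid Z] [Groupoid W]
    [Finite Y] [Finite Z] [Finite W]
    [∀ a b : Y, Finite (a ⟶ b)] [∀ a b : Z, Finite (a ⟶ b)] [∀ a b : W, Finite (a ⟶ b)]
    (p : Y ⥤ W) (s : Z ⥤ W)
    (φ : Y → ℂ) (hφ : ∀ y y' : Y, (y ≅ y') → φ y = φ y') (z : Z) :
    push p φ (s.obj z) = push (Comma.snd p s) (fun x => φ ((Comma.fst p s).obj x)) z :=
  (finsum_mul_gweight_comp_of_isEquivalence (hfiberSndFunctor p s z) (fun x => φ x.left)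
    fun _ _ e => hφ _ _ ((Comma.fst _ _).mapIso e)).symm
end
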